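/- arXiv:2601.14725 — 2 statements merged into one kernel-verified Lean document; each statement's English description precedes it below -/
import Mathlib

section
/- Let η ∈ ℝ^r have i.i.d. standard Laplace entries and let a ∈ ℝ^r with ‖a‖₁ > ε ≥ 0. Then there exists a measurable set M ⊆ ℝ^r with ℙ(a + η ∈ M) > e^ε · ℙ(η ∈ M). In other words, the shifted Laplace mechanism with ℓ¹-sensitivity exceeding ε is not (ε,0)-differentially private. -/
open MeasureTheory

/-- The law of an `r`-dimensional vector of i.i.d. standard Laplace entries:
joint density `2^{-r} e^{−‖η‖₁}` with respect to Lebesgue measure on `ℝ^r`. -/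
noncomputable def iidLaplace (r : ℕ) : Measure (Fin r → ℝ) :=
  volume.withDensity fun η =>
    ENNReal.ofReal ((2 : ℝ) ^ (-(r : ℝ)) * Real.exp (-∑ i, |η i|))

/-!
Take for `M` the unit box sitting at `a` on the far side of `a` from the origin in every
coordinate. On that box `|x i - a i| = |x i| - |a i|`, so the density of `a + η` is exactly
`e^{‖a‖₁}` times the density of `η`, whence `ℙ(a + η ∈ M) = e^{‖a‖₁} ℙ(η ∈ M)`. Since
`0 < ℙ(η ∈ M) < ∞` and `ε < ‖a‖₁`, the strict inequality follows.
-/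

open Set

theorem withDensity_preimage_add_left {G : Type*} [MeasurableSpace G] [AddGroup G]
    [MeasurableAdd G] (μ : Measure G) [μ.IsAddLeftInvariant] (f : G → ENNReal) (a : G)
    {s : Set G} (hs : MeasurableSet s) :
    μ.withDensity f ((a + ·) ⁻¹' s) = ∫⁻ x in s, f (-a + x) ∂μ := by
  rw [withDensity_apply _ (hs.preimage (measurable_const_add a)),
    ← (measurePreserving_add_left μ a).setLIntegral_comp_preimage_emb
      (measurableEmbedding_addLeft a) (fun x => f (-a + x)) s]
  simp only [neg_add_cancel_left]

def outwardUnitInterval (t : ℝ) : Set ℝ :=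
  if 0 ≤ t then Icc t (t + 1) else Icc (t - 1) t

theorem measurableSet_outwardUnitInterval (t : ℝ) : MeasurableSet (outwardUnitInterval t) := by
  unfold outwardUnitInterval
  split_ifs <;> exact measurableSet_Icc

theorem volume_outwardUnitInterval (t : ℝ) : volume (outwardUnitInterval t) = 1 := by
  unfold outwardUnitInterval
  split_ifs <;> simp [Real.volume_Icc]

theorem abs_sub_of_mem_outwardUnitInterval {t x : ℝ} (hx : x ∈ outwardUnitInterval t) :
    |x - t| = |x| - |t| := by
  unfold outwardUnitInterval at hx
  split_ifs at hx with ht <;> obtain ⟨hlo, hhi⟩ := hx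
  · rw [abs_of_nonneg ht, abs_of_nonneg (by linarith : 0 ≤ x),
      abs_of_nonneg (by linarith : 0 ≤ x - t)]
  · rw [abs_of_neg (not_le.1 ht), abs_of_neg (by linarith : x < 0),
      abs_of_nonpos (by linarith : x - t ≤ 0)]
    ring

section OutwardUnitBox

variable {ι : Type*} [Fintype ι]

def outwardUnitBox (a : ι → ℝ) : Set (ι → ℝ) :=
  univ.pi fun i => outwardUnitInterval (a i)

theorem measurableSet_outwardUnitBox (a : ι → ℝ) : MeasurableSet (outwardUnitBox a) :=
  .univ_pi fun i => measurableSet_outwardUnitInterval (a i)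

theorem volume_outwardUnitBox (a : ι → ℝ) : volume (outwardUnitBox a) = 1 := by
  simp only [outwardUnitBox, volume_pi_pi, volume_outwardUnitInterval, Finset.prod_const_one]

theorem sum_abs_neg_add_of_mem_outwardUnitBox {a x : ι → ℝ} (hx : x ∈ outwardUnitBox a) :
    ∑ i, |(-a + x) i| = ∑ i, |x i| - ∑ i, |a i| := by
  rw [← Finset.sum_sub_distrib]
  refine Finset.sum_congr rfl fun i _ => ?_
  rw [Pi.add_apply, Pi.neg_apply, neg_add_eq_sub]
  exact abs_sub_of_mem_outwardUnitInterval (hx i (mem_univ i))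

end OutwardUnitBox

noncomputable def laplaceDensity (r : ℕ) (η : Fin r → ℝ) : ENNReal :=
  ENNReal.ofReal ((2 : ℝ) ^ (-(r : ℝ)) * Real.exp (-∑ i, |η i|))

theorem iidLaplace_eq_withDensity (r : ℕ) :
    iidLaplace r = volume.withDensity (laplaceDensity r) := rfl

theorem laplaceDensity_ne_zero {r : ℕ} (η : Fin r → ℝ) : laplaceDensity r η ≠ 0 :=
  (ENNReal.ofReal_pos.2 (by positivity)).ne'

theorem laplaceDensity_le_one {r : ℕ} (η : Fin r → ℝ) : laplaceDensity r η ≤ 1 := by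
  refine ENNReal.ofReal_le_one.2 (mul_le_one₀ ?_ (Real.exp_nonneg _) ?_)
  · exact Real.rpow_le_one_of_one_le_of_nonpos one_le_two (by simp)
  · exact Real.exp_le_one_iff.2 (neg_nonpos.2 (Finset.sum_nonneg fun i _ => abs_nonneg _))

theorem measurable_laplaceDensity (r : ℕ) : Measurable (laplaceDensity r) := by
  unfold laplaceDensity
  fun_prop

theorem laplaceDensity_neg_add_of_mem_outwardUnitBox {r : ℕ} {a x : Fin r → ℝ}
    (hx : x ∈ outwardUnitBox a) :
    laplaceDensity r (-a + x) = ENNReal.ofReal (Real.exp (∑ i, |a i|)) * laplaceDensity r x := by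
  rw [laplaceDensity, laplaceDensity, sum_abs_neg_add_of_mem_outwardUnitBox hx,
    ← ENNReal.ofReal_mul (Real.exp_nonneg _), neg_sub, sub_eq_add_neg, Real.exp_add]
  ring_nf

theorem iidLaplace_outwardUnitBox_ne_zero {r : ℕ} (a : Fin r → ℝ) :
    iidLaplace r (outwardUnitBox a) ≠ 0 := by
  rw [iidLaplace_eq_withDensity, Ne,
    withDensity_apply_eq_zero' (measurable_laplaceDensity r).aemeasurable]
  simp only [laplaceDensity_ne_zero, ne_eq, not_false_eq_true, ofPred_true, univ_inter,
    volume_outwardUnitBox, one_ne_zero]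

theorem iidLaplace_outwardUnitBox_ne_top {r : ℕ} (a : Fin r → ℝ) :
    iidLaplace r (outwardUnitBox a) ≠ ⊤ := by
  rw [iidLaplace_eq_withDensity, withDensity_apply _ (measurableSet_outwardUnitBox a)]
  refine (setLIntegral_lt_top_of_le_nnreal ?_ ⟨1, fun x _ => laplaceDensity_le_one x⟩).ne
  simp [volume_outwardUnitBox]

theorem iidLaplace_preimage_add_outwardUnitBox {r : ℕ} (a : Fin r → ℝ) :
    iidLaplace r ((a + ·) ⁻¹' outwardUnitBox a) =
      ENNReal.ofReal (Real.exp (∑ i, |a i|)) * iidLaplace r (outwardUnitBox a) := by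
  have hM := measurableSet_outwardUnitBox a
  rw [iidLaplace_eq_withDensity, withDensity_preimage_add_left _ _ _ hM,
    setLIntegral_congr_fun hM fun x hx => laplaceDensity_neg_add_of_mem_outwardUnitBox hx,
    lintegral_const_mul' _ _ ENNReal.ofReal_ne_top, withDensity_apply _ hM]

theorem laplace_not_dp_general {r : ℕ} (a : Fin r → ℝ) (ε : ℝ)
    (ha : ε < ∑ i, |a i|) :
    ∃ M : Set (Fin r → ℝ), MeasurableSet M ∧
      ENNReal.ofReal (Real.exp ε) * iidLaplace r {η | η ∈ M} <
        iidLaplace r {η | a + η ∈ M} := by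
  refine ⟨outwardUnitBox a, measurableSet_outwardUnitBox a, ?_⟩
  change _ < iidLaplace r ((a + ·) ⁻¹' outwardUnitBox a)
  rw [iidLaplace_preimage_add_outwardUnitBox, ofPred_mem_eq]
  exact ENNReal.mul_lt_mul_left (iidLaplace_outwardUnitBox_ne_zero a)
    (iidLaplace_outwardUnitBox_ne_top a)
    ((ENNReal.ofReal_lt_ofReal_iff (Real.exp_pos _)).2 (Real.exp_lt_exp.2 ha))

/-- If `‖a‖₁ > ε ≥ 0` then the shifted Laplace mechanism is not `(ε,0)`-differentially
private: there is a measurable set `M` with `ℙ(a + η ∈ M) > e^ε ℙ(η ∈ M)`. -/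
theorem laplace_not_dp {r : ℕ} (a : Fin r → ℝ) (ε : ℝ) (hε : 0 ≤ ε)
    (ha : ε < ∑ i, |a i|) :
    ∃ M : Set (Fin r → ℝ), MeasurableSet M ∧
      ENNReal.ofReal (Real.exp ε) * iidLaplace r {η | η ∈ M} <
        iidLaplace r {η | a + η ∈ M} :=
  laplace_not_dp_general a ε ha
end

section
/- Let L be the symmetric Laplacian of a connected weighted graph with eigenvalues 0 = λ₁ < λ₂ ≤ … ≤ λ_n < 2, and set α = max{|1−λ₂|, |1−λ_n|} < 1. Define z(t) = x(t) − (1_n 1_nᵀ/n) x(0) for the dynamics x(t+1) = (I − L)x(t) − L Δ_σ η. Then z(t) = (I − L − (λ₂/n)1_n 1_nᵀ)^t z(0) − [I − (I−L)^t] Δ_σ η, and consequently ‖x(t) − 1_n x̄₀‖ ≤ α^t ‖x(0)‖ + (1+α^t)·(Σ_i σ_i² η_i²)^{1/2}, where x̄₀ = 1_nᵀ x(0)/n. -/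
/-!
On the sum-zero subspace `𝟙ᗮ`, which `M = I - L` preserves since `L` is symmetric with `L 𝟙 = 0`,
the quadratic form of `M` lies between `(1 - λ_n) ‖v‖²` and `(1 - λ₂) ‖v‖²`; as the norm of a
symmetric operator is the supremum of its Rayleigh quotients, `‖M^t v‖ ≤ α^t ‖v‖` there.
The error obeys `z(t+1) = M z(t) - L Δ_σ η`, which unrolls to the closed formula; the rank-one
term `(λ₂/n) 𝟙𝟙ᵀ` never acts because every `M^k z(0)` has zero sum. For the bound, `z(0)` is the
centred `x(0)`, and `(I - M^t) Δ_σ η = w - M^t w` for the centred part `w` of `Δ_σ η`, because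
`M^t` fixes constants.
-/

open Matrix
open WithLp (toLp)
open scoped RealInnerProductSpace

namespace LinearMap.IsSymmetric

variable {E : Type*} [NormedAddCommGroup E] [InnerProductSpace ℝ E] [FiniteDimensional ℝ E]
  {T : E →ₗ[ℝ] E} {α : ℝ}

theorem norm_apply_le_of_abs_inner_le (hT : T.IsSymmetric) (hα : 0 ≤ α)
    (h : ∀ x, |⟪T x, x⟫| ≤ α * ‖x‖ ^ 2) (x : E) : ‖T x‖ ≤ α * ‖x‖ := by
  have hnorm : ‖LinearMap.toContinuousLinearMap T‖ ≤ α := by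
    rw [ContinuousLinearMap.norm_eq_iSup_rayleighQuotient _ hT]
    refine ciSup_le fun y => ?_
    rcases eq_or_ne y 0 with rfl | hy
    · simpa using hα
    · rw [ContinuousLinearMap.rayleighQuotient, ContinuousLinearMap.reApplyInnerSelf_apply,
        abs_div, abs_sq, div_le_iff₀ (by positivity)]
      simpa using h y
  exact ((LinearMap.toContinuousLinearMap T).le_opNorm x).trans (by gcongr)

theorem norm_pow_apply_le_of_abs_inner_le (hT : T.IsSymmetric) (hα : 0 ≤ α)
    {V : Submodule ℝ E} (hV : ∀ v ∈ V, T v ∈ V) (h : ∀ v ∈ V, |⟪T v, v⟫| ≤ α * ‖v‖ ^ 2)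
    (t : ℕ) {v : E} (hv : v ∈ V) : ‖(T ^ t) v‖ ≤ α ^ t * ‖v‖ := by
  have hrestrict := (hT.restrict_invariant hV).norm_apply_le_of_abs_inner_le hα fun w => h w w.2
  have hpow : ∀ w : V, ‖((T.restrict hV) ^ t) w‖ ≤ α ^ t * ‖w‖ := by
    induction t with
    | zero => simp
    | succ t ih =>
      intro w
      rw [pow_succ', Module.End.mul_apply, pow_succ, mul_comm _ α, mul_assoc]
      exact (hrestrict _).trans (by gcongr; exact ih w)
  simpa [Module.End.pow_restrict t hV] using hpow ⟨v, hv⟩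

end LinearMap.IsSymmetric

section Centering

variable {ι : Type*} [Fintype ι]

theorem EuclideanSpace.norm_toLp_eq_sqrt (v : ι → ℝ) :
    ‖(toLp 2 v : EuclideanSpace ℝ ι)‖ = √(∑ i, v i ^ 2) := by
  simp [EuclideanSpace.norm_eq]

theorem EuclideanSpace.mem_orthogonal_one_iff (x : EuclideanSpace ℝ ι) :
    x ∈ (ℝ ∙ toLp 2 (1 : ι → ℝ))ᗮ ↔ ∑ i, x i = 0 := by
  simp [Submodule.mem_orthogonal_singleton_iff_inner_right,
    EuclideanSpace.inner_eq_star_dotProduct, dotProduct_one]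

theorem card_mul_sum_div_card (v : ι → ℝ) :
    (Fintype.card ι : ℝ) * ((∑ i, v i) / Fintype.card ι) = ∑ i, v i :=
  mul_div_cancel_of_imp' fun h => by
    simp [Fintype.card_eq_zero_iff.mp (by exact_mod_cast h)]

theorem sum_sub_mean_eq_zero (v : ι → ℝ) :
    ∑ i, (v i - (∑ j, v j) / Fintype.card ι) = 0 := by
  rw [Finset.sum_sub_distrib, Finset.sum_const, Finset.card_univ, nsmul_eq_mul,
    card_mul_sum_div_card, sub_self]

theorem sum_sq_sub_mean_le (v : ι → ℝ) :
    ∑ i, (v i - (∑ j, v j) / Fintype.card ι) ^ 2 ≤ ∑ i, v i ^ 2 := by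
  set c := (∑ j, v j) / Fintype.card ι
  have hexpand : ∑ i, (v i - c) ^ 2 = ∑ i, v i ^ 2 - Fintype.card ι * c ^ 2 := by
    simp only [sub_sq, Finset.sum_add_distrib, Finset.sum_sub_distrib, ← Finset.sum_mul,
      ← Finset.mul_sum, Finset.sum_const, Finset.card_univ, nsmul_eq_mul]
    rw [← card_mul_sum_div_card v]
    ring
  have hc : 0 ≤ (Fintype.card ι : ℝ) * c ^ 2 := by positivity
  linarith

end Centering

namespace Matrix

variable {ι R : Type*} [Fintype ι] [CommRing R]

theorem mulVec_eq_zero_of_forall_eq_one {J : Matrix ι ι R} (hJ : ∀ i j, J i j = 1)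
    {w : ι → R} (hw : ∑ i, w i = 0) : J *ᵥ w = 0 := by
  ext i
  simp [mulVec, dotProduct, hJ, hw]

variable [DecidableEq ι]

theorem pow_sub_mulVec_eq_pow_mulVec {A B : Matrix ι ι R} {v : ι → R}
    (h : ∀ k : ℕ, B *ᵥ (A ^ k *ᵥ v) = 0) (t : ℕ) : (A - B) ^ t *ᵥ v = A ^ t *ᵥ v := by
  induction t with
  | zero => rfl
  | succ t ih =>
    rw [pow_succ', ← mulVec_mulVec, ih, sub_mulVec, h, sub_zero, mulVec_mulVec, pow_succ']

theorem eq_pow_mulVec_sub_of_succ_eq {A : Matrix ι ι R} {d : ι → R} {z : ℕ → ι → R}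
    (hz : ∀ t, z (t + 1) = A *ᵥ z t - (1 - A) *ᵥ d) (t : ℕ) :
    z t = A ^ t *ᵥ z 0 - (1 - A ^ t) *ᵥ d := by
  induction t with
  | zero => simp
  | succ t ih =>
    have hpow : A * (1 - A ^ t) + (1 - A) = 1 - A ^ (t + 1) := by
      rw [pow_succ']
      noncomm_ring
    rw [hz, ih, mulVec_sub, mulVec_mulVec, mulVec_mulVec, ← pow_succ', sub_sub, ← add_mulVec, hpow]

variable {L : Matrix ι ι R}

theorem sum_one_sub_mulVec (hL : L.IsSymm) (h1 : L *ᵥ 1 = 0) (v : ι → R) :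
    ∑ i, ((1 - L) *ᵥ v) i = ∑ i, v i := by
  have hL1 : 1 ᵥ* L = 0 := by rw [← mulVec_transpose, hL.eq, h1]
  rw [← one_dotProduct, ← one_dotProduct, dotProduct_mulVec, vecMul_sub, vecMul_one, hL1,
    sub_zero]

theorem sum_one_sub_pow_mulVec (hL : L.IsSymm) (h1 : L *ᵥ 1 = 0) (t : ℕ) (v : ι → R) :
    ∑ i, ((1 - L) ^ t *ᵥ v) i = ∑ i, v i := by
  induction t with
  | zero => simp
  | succ t ih => rw [pow_succ', ← mulVec_mulVec, sum_one_sub_mulVec hL h1, ih]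

theorem one_sub_pow_mulVec_const (h1 : L *ᵥ 1 = 0) (t : ℕ) (c : R) :
    (1 - L) ^ t *ᵥ (fun _ => c) = fun _ => c := by
  have hL : L *ᵥ (fun _ => c) = 0 := by
    rw [show (fun _ => c) = c • (1 : ι → R) by ext; simp, mulVec_smul, h1, smul_zero]
  induction t with
  | zero => simp
  | succ t ih => rw [pow_succ, ← mulVec_mulVec, sub_mulVec, hL, one_mulVec, sub_zero, ih]

end Matrix

section Laplacian

variable {ι : Type*} [Fintype ι] [DecidableEq ι] {L : Matrix ι ι ℝ}

def RayleighBoundedOnSumZero (L : Matrix ι ι ℝ) (a b : ℝ) : Prop :=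
  ∀ v : ι → ℝ, ∑ i, v i = 0 →
    a * (∑ i, v i ^ 2) ≤ v ⬝ᵥ (L *ᵥ v) ∧ v ⬝ᵥ (L *ᵥ v) ≤ b * (∑ i, v i ^ 2)

variable {lam2 lamn : ℝ}

theorem abs_dotProduct_one_sub_mulVec_le (hspec : RayleighBoundedOnSumZero L lam2 lamn)
    {v : ι → ℝ} (hv : ∑ i, v i = 0) :
    |v ⬝ᵥ ((1 - L) *ᵥ v)| ≤ max |1 - lam2| |1 - lamn| * ∑ i, v i ^ 2 := by
  obtain ⟨hlow, hup⟩ := hspec v hv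
  have hS : 0 ≤ ∑ i, v i ^ 2 := by positivity
  have h2 := (le_abs_self (1 - lam2)).trans (le_max_left _ |1 - lamn|)
  have hn := (neg_abs_le (1 - lamn)).trans' (neg_le_neg (le_max_right |1 - lam2| _))
  have hvv : v ⬝ᵥ v = ∑ i, v i ^ 2 := by simp [dotProduct, sq]
  rw [sub_mulVec, one_mulVec, dotProduct_sub, hvv, abs_le]
  constructor <;> nlinarith [mul_le_mul_of_nonneg_right h2 hS, mul_le_mul_of_nonneg_right hn hS]

theorem norm_one_sub_pow_mulVec_le (hL : L.IsSymm) (h1 : L *ᵥ 1 = 0)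
    (hspec : RayleighBoundedOnSumZero L lam2 lamn) (t : ℕ) {v : ι → ℝ} (hv : ∑ i, v i = 0) :
    ‖toLp 2 ((1 - L) ^ t *ᵥ v)‖ ≤ max |1 - lam2| |1 - lamn| ^ t * ‖toLp 2 v‖ := by
  have hT : (toEuclideanLin (1 - L)).IsSymmetric :=
    isSymmetric_toEuclideanLin_iff.mpr (by simpa using isSymm_one.sub hL)
  have hV : ∀ x ∈ (ℝ ∙ toLp 2 (1 : ι → ℝ))ᗮ,
      toEuclideanLin (1 - L) x ∈ (ℝ ∙ toLp 2 (1 : ι → ℝ))ᗮ := by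
    intro x hx
    rw [EuclideanSpace.mem_orthogonal_one_iff] at hx ⊢
    exact (sum_one_sub_mulVec hL h1 x.ofLp).trans hx
  have hrayleigh : ∀ x ∈ (ℝ ∙ toLp 2 (1 : ι → ℝ))ᗮ,
      |⟪toEuclideanLin (1 - L) x, x⟫| ≤ max |1 - lam2| |1 - lamn| * ‖x‖ ^ 2 := by
    intro x hx
    rw [EuclideanSpace.mem_orthogonal_one_iff] at hx
    rw [EuclideanSpace.inner_eq_star_dotProduct, star_trivial, EuclideanSpace.real_norm_sq_eq]
    exact abs_dotProduct_one_sub_mulVec_le hspec hx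
  have hpow := hT.norm_pow_apply_le_of_abs_inner_le (by positivity) hV hrayleigh t
    ((EuclideanSpace.mem_orthogonal_one_iff _).mpr hv)
  rwa [← toLpLin_pow] at hpow

theorem norm_one_sub_one_sub_pow_mulVec_le (hL : L.IsSymm) (h1 : L *ᵥ 1 = 0)
    (hspec : RayleighBoundedOnSumZero L lam2 lamn) (t : ℕ) (d : ι → ℝ) :
    ‖toLp 2 ((1 - (1 - L) ^ t) *ᵥ d)‖ ≤
      (1 + max |1 - lam2| |1 - lamn| ^ t) * ‖toLp 2 d‖ := by
  set c := (∑ j, d j) / Fintype.card ι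
  set w : ι → ℝ := fun i => d i - c
  have hw : (1 - (1 - L) ^ t) *ᵥ d = w - (1 - L) ^ t *ᵥ w := by
    have hd : d = w + fun _ => c := by ext; simp [w]
    conv_lhs => rw [hd]
    simp only [sub_mulVec, mulVec_add, one_mulVec, one_sub_pow_mulVec_const h1]
    abel
  have hwd : ‖toLp 2 w‖ ≤ ‖toLp 2 d‖ := by
    rw [EuclideanSpace.norm_toLp_eq_sqrt, EuclideanSpace.norm_toLp_eq_sqrt]
    exact Real.sqrt_le_sqrt (sum_sq_sub_mean_le d)
  calc ‖toLp 2 ((1 - (1 - L) ^ t) *ᵥ d)‖ = ‖toLp 2 w - toLp 2 ((1 - L) ^ t *ᵥ w)‖ := by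
        rw [hw, WithLp.toLp_sub]
    _ ≤ ‖toLp 2 w‖ + ‖toLp 2 ((1 - L) ^ t *ᵥ w)‖ := norm_sub_le _ _
    _ ≤ ‖toLp 2 w‖ + max |1 - lam2| |1 - lamn| ^ t * ‖toLp 2 w‖ := by
        gcongr
        exact norm_one_sub_pow_mulVec_le hL h1 hspec t (sum_sub_mean_eq_zero d)
    _ = (1 + max |1 - lam2| |1 - lamn| ^ t) * ‖toLp 2 w‖ := by ring
    _ ≤ (1 + max |1 - lam2| |1 - lamn| ^ t) * ‖toLp 2 d‖ := by gcongr

end Laplacian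

theorem consensus_error_bound_general
    {n : ℕ}
    (L : Matrix (Fin n) (Fin n) ℝ) (hsymm : L.IsSymm)
    (hLone : (L *ᵥ fun _ => (1 : ℝ)) = 0)
    (lam2 lamn : ℝ)
    (hspec : ∀ v : Fin n → ℝ, (∑ i, v i) = 0 →
      lam2 * (∑ i, v i ^ 2) ≤ v ⬝ᵥ (L *ᵥ v) ∧ v ⬝ᵥ (L *ᵥ v) ≤ lamn * (∑ i, v i ^ 2))
    (α : ℝ) (hα : α = max |1 - lam2| |1 - lamn|)
    (σ : Fin n → ℝ) (η : Fin n → ℝ)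
    (x : ℕ → Fin n → ℝ)
    (hx : ∀ t, x (t + 1) = (1 - L) *ᵥ x t - L *ᵥ (Matrix.diagonal σ *ᵥ η))
    (xbar : ℝ) (hxbar : xbar = (∑ i, x 0 i) / n)
    (z : ℕ → Fin n → ℝ) (hz : ∀ t, z t = x t - fun _ => xbar)
    (J : Matrix (Fin n) (Fin n) ℝ) (hJ : ∀ i j, J i j = 1) :
    (∀ t, z t = (1 - L - (lam2 / n) • J) ^ t *ᵥ z 0
        - (1 - (1 - L) ^ t) *ᵥ (Matrix.diagonal σ *ᵥ η)) ∧
    ∀ t, Real.sqrt (∑ i, (x t i - xbar) ^ 2) ≤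
      α ^ t * Real.sqrt (∑ i, x 0 i ^ 2)
        + (1 + α ^ t) * Real.sqrt (∑ i, σ i ^ 2 * η i ^ 2) := by
  subst hα
  set M := 1 - L
  set d := diagonal σ *ᵥ η
  have hz0 : ∑ i, z 0 i = 0 := by
    simpa [hz, hxbar] using sum_sub_mean_eq_zero (x 0)
  have hMc : M *ᵥ (fun _ => xbar) = fun _ => xbar := by
    simpa using one_sub_pow_mulVec_const hLone 1 xbar
  have hzM : ∀ t, z t = M ^ t *ᵥ z 0 - (1 - M ^ t) *ᵥ d :=
    eq_pow_mulVec_sub_of_succ_eq fun t => by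
      rw [hz, hz, hx, mulVec_sub, hMc, sub_sub_cancel]
      abel
  have hJ0 : ∀ k : ℕ, ((lam2 / n) • J) *ᵥ (M ^ k *ᵥ z 0) = 0 := fun k => by
    rw [smul_mulVec, mulVec_eq_zero_of_forall_eq_one hJ
      ((sum_one_sub_pow_mulVec hsymm hLone k _).trans hz0), smul_zero]
  refine ⟨fun t => by rw [pow_sub_mulVec_eq_pow_mulVec hJ0, ← hzM], fun t => ?_⟩
  have hz0x : ‖toLp 2 (z 0)‖ ≤ √(∑ i, x 0 i ^ 2) := by
    rw [EuclideanSpace.norm_toLp_eq_sqrt]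
    exact Real.sqrt_le_sqrt (by simpa [hz, hxbar] using sum_sq_sub_mean_le (x 0))
  have hd : ‖toLp 2 d‖ = √(∑ i, σ i ^ 2 * η i ^ 2) := by
    simp [EuclideanSpace.norm_toLp_eq_sqrt, d, mulVec_diagonal, mul_pow]
  calc √(∑ i, (x t i - xbar) ^ 2)
      = ‖toLp 2 (M ^ t *ᵥ z 0) - toLp 2 ((1 - M ^ t) *ᵥ d)‖ := by
        rw [← WithLp.toLp_sub, ← hzM, hz, EuclideanSpace.norm_toLp_eq_sqrt]
        rfl
    _ ≤ ‖toLp 2 (M ^ t *ᵥ z 0)‖ + ‖toLp 2 ((1 - M ^ t) *ᵥ d)‖ := norm_sub_le _ _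
    _ ≤ max |1 - lam2| |1 - lamn| ^ t * √(∑ i, x 0 i ^ 2)
          + (1 + max |1 - lam2| |1 - lamn| ^ t) * √(∑ i, σ i ^ 2 * η i ^ 2) := by
        rw [← hd]
        gcongr
        · exact (norm_one_sub_pow_mulVec_le hsymm hLone hspec t hz0).trans (by gcongr)
        · exact norm_one_sub_one_sub_pow_mulVec_le hsymm hLone hspec t d

/-- Deterministic consensus error bound: with `L` a symmetric Laplacian whose nonzero
eigenvalues lie in `[λ₂, λ_n] ⊆ (0,2)` and `α = max{|1−λ₂|, |1−λ_n|}`, the deviation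
`z(t) = x(t) − 1 x̄₀` satisfies
`z(t) = (I − L − (λ₂/n) 1 1ᵀ)^t z(0) − [I − (I−L)^t] Δ_σ η` and
`‖x(t) − 1 x̄₀‖ ≤ α^t ‖x(0)‖ + (1+α^t) (Σ σ_i² η_i²)^{1/2}`. -/
theorem consensus_error_bound
    {n : ℕ} (hn : 1 ≤ n)
    (L : Matrix (Fin n) (Fin n) ℝ) (hsymm : L.IsSymm)
    (hLone : (L *ᵥ fun _ => (1 : ℝ)) = 0)
    (lam2 lamn : ℝ) (hlam2 : 0 < lam2) (hlamn : lamn < 2) (hle : lam2 ≤ lamn)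
    (hspec : ∀ v : Fin n → ℝ, (∑ i, v i) = 0 →
      lam2 * (∑ i, v i ^ 2) ≤ v ⬝ᵥ (L *ᵥ v) ∧ v ⬝ᵥ (L *ᵥ v) ≤ lamn * (∑ i, v i ^ 2))
    (α : ℝ) (hα : α = max |1 - lam2| |1 - lamn|)
    (σ : Fin n → ℝ) (η : Fin n → ℝ)
    (x : ℕ → Fin n → ℝ)
    (hx : ∀ t, x (t + 1) = (1 - L) *ᵥ x t - L *ᵥ (Matrix.diagonal σ *ᵥ η))
    (xbar : ℝ) (hxbar : xbar = (∑ i, x 0 i) / n)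
    (z : ℕ → Fin n → ℝ) (hz : ∀ t, z t = x t - fun _ => xbar)
    (J : Matrix (Fin n) (Fin n) ℝ) (hJ : ∀ i j, J i j = 1) :
    (∀ t, z t = (1 - L - (lam2 / n) • J) ^ t *ᵥ z 0
        - (1 - (1 - L) ^ t) *ᵥ (Matrix.diagonal σ *ᵥ η)) ∧
    ∀ t, Real.sqrt (∑ i, (x t i - xbar) ^ 2) ≤
      α ^ t * Real.sqrt (∑ i, x 0 i ^ 2)
        + (1 + α ^ t) * Real.sqrt (∑ i, σ i ^ 2 * η i ^ 2) :=
  consensus_error_bound_general L hsymm hLone lam2 lamn hspec α hα σ η x hx xbar hxbar z hz J hJ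
end
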